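/- For every natural number n, Σ_{k=0}^{n+1} p^B_{n,k}(x) = B_{n+1}(x). -/

import Mathlib

open Polynomial PowerSeries

/-- The polynomials `p^B_{n,k}` defined recursively as in
Proposition (e): `p^B_{0,0} = 1`, `p^B_{0,1} = x`,
`p^B_{n+1,0} = ∑_{i=0}^{n+1} p^B_{n,i}`,
`p^B_{n+1,k} = 2x ∑_{i=0}^{k-1} p^B_{n,i} + 2 ∑_{i=k}^{n+1} p^B_{n,i}` for `1 ≤ k ≤ n+1`, and
`p^B_{n+1,n+2} = x ∑_{i=0}^{n+1} p^B_{n,i}`. -/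
noncomputable def pB : ℕ → ℕ → Polynomial ℝ
  | 0, 0 => 1
  | 0, 1 => Polynomial.X
  | 0, _ + 2 => 0
  | n + 1, 0 => ∑ i ∈ Finset.range (n + 2), pB n i
  | n + 1, k + 1 =>
      if k + 1 ≤ n + 1 then
        2 * Polynomial.X * (∑ i ∈ Finset.range (k + 1), pB n i) +
          2 * ∑ i ∈ Finset.Icc (k + 1) (n + 1), pB n i
      else if k + 1 = n + 2 then
        Polynomial.X * ∑ i ∈ Finset.range (n + 2), pB n i
      else 0
  termination_by n _ => n

/-!
Write `p^B_{n,k} = (1 - x)^{n+1} ∑_m a_{n,k}(m) x^m`. The coefficient sequences have closed forms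
`a_{n,0}(m) = (2m+1)^n`, `a_{n,k}(m) = 4m (2m+1)^{n-k} (2m-1)^{k-1}` for `1 ≤ k ≤ n`, and
`a_{n,n+1}(m) = (2m-1)^n` for `m ≥ 1` (and `0` at `m = 0`). Their partial sums over `k` telescope
to `(2m+1)^{n+1} - 2m (2m+1)^{n+1-k} (2m-1)^{k-1}`. Dividing the recursion by `(1 - x)^{n+2}` turns
each of its cases into an identity of power series, checked coefficientwise since
`(1 - x) ∑_m g_m x^m` has coefficients `g_m - g_{m-1}`. Finally `∑_k p^B_{n,k} = p^B_{n+1,0}`,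
whose coefficient sequence is `(2m+1)^{n+1}`.
-/

theorem PowerSeries.eq_one_sub_X_mul_mk {R : Type*} [Ring R] {φ : R⟦X⟧} {g : ℕ → R}
    (h_zero : coeff 0 φ = g 0) (h_succ : ∀ m, coeff (m + 1) φ = g (m + 1) - g m) :
    φ = (1 - PowerSeries.X) * mk g := by
  ext (_ | m) <;> simp [sub_mul, h_zero, h_succ]

theorem PowerSeries.sum_mk {R ι : Type*} [Semiring R] (s : Finset ι) (f : ι → ℕ → R) :
    ∑ i ∈ s, mk (f i) = mk fun m => ∑ i ∈ s, f i m := by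
  ext m
  simp [map_sum]

@[simp, norm_cast]
theorem Polynomial.coe_ofNat {R : Type*} [CommSemiring R] (k : ℕ) [k.AtLeastTwo] :
    ((ofNat(k) : R[X]) : R⟦X⟧) = ofNat(k) :=
  map_ofNat coeToPowerSeries.ringHom k

theorem Polynomial.coe_finset_sum {R ι : Type*} [CommSemiring R] (s : Finset ι) (p : ι → R[X]) :
    ((∑ i ∈ s, p i : R[X]) : R⟦X⟧) = ∑ i ∈ s, (p i : R⟦X⟧) :=
  map_sum coeToPowerSeries.ringHom p s

section Recursion

variable (n : ℕ)

theorem pB_succ_zero : pB (n + 1) 0 = ∑ i ∈ Finset.range (n + 2), pB n i := by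
  rw [pB]

theorem pB_succ_succ {j : ℕ} (hj : j ≤ n) :
    pB (n + 1) (j + 1) = 2 * Polynomial.X * ∑ i ∈ Finset.range (j + 1), pB n i +
      2 * (∑ i ∈ Finset.range (n + 2), pB n i - ∑ i ∈ Finset.range (j + 1), pB n i) := by
  rw [pB, if_pos (by omega), ← Finset.sum_Ico_eq_sub _ (by omega),
    ← Finset.Ico_add_one_right_eq_Icc]
  rfl

theorem pB_succ_last :
    pB (n + 1) (n + 2) = Polynomial.X * ∑ i ∈ Finset.range (n + 2), pB n i := by
  rw [pB, if_neg (by omega), if_pos rfl]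

theorem pB_eq_zero_of_lt {k : ℕ} (hk : n + 1 < k) : pB n k = 0 := by
  obtain ⟨k, rfl⟩ : ∃ j, k = j + 2 := ⟨k - 2, by omega⟩
  cases n with
  | zero => rw [pB]
  | succ n => rw [pB, if_neg (by omega), if_neg (by omega)]

end Recursion

noncomputable def pBCoeff (n : ℕ) : ℕ → ℕ → ℝ
  | 0, m => (2 * (m : ℝ) + 1) ^ n
  | k + 1, m =>
    if k < n then 4 * (m : ℝ) * (2 * (m : ℝ) + 1) ^ (n - 1 - k) * (2 * (m : ℝ) - 1) ^ k
    else if k = n then if m = 0 then 0 else (2 * (m : ℝ) - 1) ^ n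
    else 0

noncomputable def pBPartial (n k m : ℕ) : ℝ :=
  ∑ i ∈ Finset.range k, pBCoeff n i m

section ClosedForms

variable {n : ℕ} (m : ℕ)

theorem pBCoeff_succ_of_eq_add {j t : ℕ} (h : n = j + t + 1) :
    pBCoeff n (j + 1) m = 4 * m * (2 * m + 1) ^ t * (2 * m - 1) ^ j := by
  rw [pBCoeff, if_pos (by omega), show n - 1 - j = t by omega]

theorem pBCoeff_succ_self : pBCoeff n (n + 1) m = if m = 0 then 0 else (2 * (m : ℝ) - 1) ^ n := by
  rw [pBCoeff, if_neg (lt_irrefl n), if_pos rfl]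

theorem mk_pBCoeff_of_lt {k : ℕ} (hk : n + 1 < k) : mk (pBCoeff n k) = 0 := by
  obtain ⟨k, rfl⟩ : ∃ j, k = j + 1 := ⟨k - 1, by omega⟩
  ext m
  rw [coeff_mk, pBCoeff, if_neg (by omega), if_neg (by omega), map_zero]

theorem pBPartial_succ_of_eq_add {j t : ℕ} (h : n = j + t) :
    pBPartial n (j + 1) m = (2 * m + 1) ^ (n + 1) - 2 * m * (2 * m + 1) ^ t * (2 * m - 1) ^ j := by
  induction j generalizing t with
  | zero =>
    rw [pBPartial, Finset.sum_range_one, pBCoeff, h, zero_add]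
    ring
  | succ j ih =>
    rw [pBPartial, Finset.sum_range_succ, ← pBPartial, ih (t := t + 1) (by omega),
      pBCoeff_succ_of_eq_add m (t := t) (by omega)]
    ring

theorem pBPartial_last :
    pBPartial n (n + 2) m =
      if m = 0 then 1 else (2 * (m : ℝ) + 1) ^ (n + 1) - (2 * (m : ℝ) - 1) ^ (n + 1) := by
  rw [pBPartial, Finset.sum_range_succ, ← pBPartial, pBPartial_succ_of_eq_add m (add_zero n).symm,
    pBCoeff_succ_self]
  split_ifs with hm
  · simp [hm]
  · ring

end ClosedForms

section GeneratingFunctions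

variable (n : ℕ)

theorem mk_pBPartial_last :
    mk (pBPartial n (n + 2)) = (1 - PowerSeries.X) * mk (pBCoeff (n + 1) 0) := by
  refine eq_one_sub_X_mul_mk (by simp [pBPartial_last, pBCoeff]) fun m => ?_
  simp only [coeff_mk, pBPartial_last, if_neg m.succ_ne_zero, pBCoeff, Nat.cast_succ]
  ring

theorem two_X_mul_mk_pBPartial_add {j : ℕ} (hj : j ≤ n) :
    2 * PowerSeries.X * mk (pBPartial n (j + 1)) +
        2 * (mk (pBPartial n (n + 2)) - mk (pBPartial n (j + 1))) =
      (1 - PowerSeries.X) * mk (pBCoeff (n + 1) (j + 1)) := by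
  obtain ⟨t, rfl⟩ : ∃ t, n = j + t := ⟨n - j, by omega⟩
  refine eq_one_sub_X_mul_mk
    (by simp [pBPartial_last, pBPartial_succ_of_eq_add _ rfl, pBCoeff_succ_of_eq_add _ rfl])
    fun m => ?_
  simp only [two_mul, add_mul, map_add, map_sub, coeff_succ_X_mul, coeff_mk, pBPartial_last,
    if_neg m.succ_ne_zero, pBPartial_succ_of_eq_add _ rfl, pBCoeff_succ_of_eq_add _ rfl,
    Nat.cast_succ]
  ring

theorem X_mul_mk_pBPartial_last :
    PowerSeries.X * mk (pBPartial n (n + 2)) =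
      (1 - PowerSeries.X) * mk (pBCoeff (n + 1) (n + 2)) := by
  refine eq_one_sub_X_mul_mk (by simp [pBCoeff_succ_self]) fun m => ?_
  rcases m with _ | m
  · norm_num [pBPartial_last, pBCoeff_succ_self]
  · simp only [coeff_succ_X_mul, coeff_mk, pBPartial_last, pBCoeff_succ_self,
      if_neg m.succ_ne_zero, if_neg (m + 1).succ_ne_zero, Nat.cast_succ]
    ring

end GeneratingFunctions

theorem coe_sum_range_pB {n : ℕ}
    (ih : ∀ k, (pB n k : ℝ⟦X⟧) = (1 - PowerSeries.X) ^ (n + 1) * mk (pBCoeff n k))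
    (j : ℕ) :
    ((∑ i ∈ Finset.range j, pB n i : ℝ[X]) : ℝ⟦X⟧) =
      (1 - PowerSeries.X) ^ (n + 1) * mk (pBPartial n j) := by
  simp only [Polynomial.coe_finset_sum, ih, ← Finset.mul_sum, sum_mk]
  rfl

theorem coe_pB (n k : ℕ) :
    (pB n k : ℝ⟦X⟧) = (1 - PowerSeries.X) ^ (n + 1) * mk (pBCoeff n k) := by
  induction n generalizing k with
  | zero =>
    rcases k with _ | _ | k
    · rw [pB, Polynomial.coe_one, zero_add, pow_one]
      refine eq_one_sub_X_mul_mk ?_ fun m => ?_ <;> simp [pBCoeff]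
    · rw [pB, Polynomial.coe_X, zero_add, pow_one]
      refine eq_one_sub_X_mul_mk (by simp [pBCoeff_succ_self]) fun m => ?_
      rcases m with _ | m <;> simp [pBCoeff_succ_self, PowerSeries.coeff_X]
    · rw [pB_eq_zero_of_lt 0 (by omega), mk_pBCoeff_of_lt (by omega), Polynomial.coe_zero,
        mul_zero]
  | succ n ih =>
    have hS := coe_sum_range_pB ih
    rcases k with _ | j
    · rw [pB_succ_zero, hS]
      linear_combination (1 - PowerSeries.X) ^ (n + 1) * mk_pBPartial_last n
    rcases Nat.lt_trichotomy j (n + 1) with hj | rfl | hj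
    · have hjn : j ≤ n := Nat.lt_succ_iff.mp hj
      rw [pB_succ_succ n hjn]
      push_cast
      rw [hS, hS]
      linear_combination (1 - PowerSeries.X) ^ (n + 1) * two_X_mul_mk_pBPartial_add n hjn
    · rw [pB_succ_last]
      push_cast
      rw [hS]
      linear_combination (1 - PowerSeries.X) ^ (n + 1) * X_mul_mk_pBPartial_last n
    · rw [pB_eq_zero_of_lt (n + 1) (by omega), mk_pBCoeff_of_lt (by omega), Polynomial.coe_zero,
        mul_zero]

/-- `∑_{k=0}^{n+1} p^B_{n,k}(x) = B_{n+1}(x)`, where `B_{n+1}` is the type `B` Eulerian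
polynomial, determined by `∑_{m ≥ 0} (2m+1)^{n+1} x^m = B_{n+1}(x)/(1-x)^{n+2}` in `ℝ⟦x⟧`. -/
theorem pB_sum_eq_eulerianB (n : ℕ) (B : Polynomial ℝ)
    (hB : (B : PowerSeries ℝ) =
      (1 - PowerSeries.X) ^ (n + 2) * PowerSeries.mk (fun m => ((2 * m + 1 : ℝ)) ^ (n + 1))) :
    ∑ k ∈ Finset.range (n + 2), pB n k = B := by
  rw [← pB_succ_zero, ← Polynomial.coe_inj, hB, coe_pB]
  rfl
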